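/- Let A : ℝ → ℝ be defined recursively by A₁(z) = |d₁ + z| + c₁|z| and A_j(z) = c_j|z| + min_{w∈ℝ}(|w − z − d_j| + A_{j−1}(w)) for 2 ≤ j ≤ n−2, where all c_j ≥ 0 and d_j ∈ ℝ. Then each A_j is convex, and its leftmost slope is at most −1 and its rightmost slope is at least 1; in fact the leftmost slope of A_j is −1 − c_j and the rightmost slope is 1 + c_j. -/

import Mathlib

/-- The recursively defined partial objective functions of the dynamic program:
`A 1 z = |d 1 + z| + c 1 |z|` and
`A j z = c j |z| + min_w (|w - z - d j| + A (j-1) w)` for `j ≥ 2`. -/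
noncomputable def Arec (c d : ℕ → ℝ) : ℕ → ℝ → ℝ
  | 0 => fun _ => 0
  | 1 => fun z => |d 1 + z| + c 1 * |z|
  | (j + 2) => fun z => c (j + 2) * |z| + ⨅ w : ℝ, (|w - z - d (j + 2)| + Arec c d (j + 1) w)

/-!
The step `A ↦ (t ↦ inf_w (|w - t| + A w))` preserves convexity and lower bounds and clips the
tail slopes to `[-1, 1]`: the result is `1`-Lipschitz, and where `A` falls at rate at least `1`
it falls at rate exactly `1`. Adding `c j * |z|` and shifting by `d j` then give the left slope
`-1 - c j`. The right tail follows by symmetry, since `z ↦ A j (-z)` satisfies the same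
recursion with `d` replaced by `-d`.
-/

open Set

/-- Inf-convolution with `|·|`; the infimum over `ℝ` is junk (`0`) unless `A` is bounded below. -/
noncomputable def absInfConv (A : ℝ → ℝ) (t : ℝ) : ℝ :=
  ⨅ w : ℝ, (|w - t| + A w)

def HasLeftTailSlope (f : ℝ → ℝ) (s : ℝ) : Prop :=
  ∃ z₀ : ℝ, ∀ z w : ℝ, z ≤ w → w ≤ z₀ → f w - f z = s * (w - z)

def HasRightTailSlope (f : ℝ → ℝ) (s : ℝ) : Prop :=
  ∃ z₁ : ℝ, ∀ z w : ℝ, z₁ ≤ z → z ≤ w → f w - f z = s * (w - z)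

theorem convexOn_univ_abs : ConvexOn ℝ univ (fun x : ℝ => |x|) :=
  convexOn_univ_norm

section absInfConv

variable {A : ℝ → ℝ}

theorem bddBelow_range_abs_sub_add (hA : BddBelow (range A)) (t : ℝ) :
    BddBelow (range fun w => |w - t| + A w) := by
  obtain ⟨m, hm⟩ := hA
  refine ⟨m, ?_⟩
  rintro _ ⟨w, rfl⟩
  linarith [hm ⟨w, rfl⟩, abs_nonneg (w - t)]

theorem absInfConv_le (hA : BddBelow (range A)) (t w : ℝ) : absInfConv A t ≤ |w - t| + A w :=
  ciInf_le (bddBelow_range_abs_sub_add hA t) w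

theorem absInfConv_le_self (hA : BddBelow (range A)) (t : ℝ) : absInfConv A t ≤ A t := by
  simpa using absInfConv_le hA t t

theorem le_absInfConv {a t : ℝ} (h : ∀ w, a ≤ |w - t| + A w) : a ≤ absInfConv A t :=
  le_ciInf h

theorem absInfConv_nonneg (hA : ∀ w, 0 ≤ A w) (t : ℝ) : 0 ≤ absInfConv A t :=
  le_absInfConv fun w => add_nonneg (abs_nonneg _) (hA w)

theorem absInfConv_le_add_abs_sub (hA : BddBelow (range A)) (s t : ℝ) :
    absInfConv A s ≤ absInfConv A t + |s - t| := by
  rw [← sub_le_iff_le_add]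
  refine le_absInfConv fun w => ?_
  linarith [absInfConv_le hA s w, abs_sub_le w t s, abs_sub_comm s t]

theorem absInfConv_comp_neg (A : ℝ → ℝ) (t : ℝ) :
    absInfConv (fun w => A (-w)) t = absInfConv A (-t) := by
  rw [absInfConv, absInfConv, ← neg_surjective.iInf_comp]
  congr! 2 with w
  rw [← abs_neg]
  ring_nf

theorem convexOn_absInfConv (hA : BddBelow (range A)) (hconv : ConvexOn ℝ univ A) :
    ConvexOn ℝ univ (absInfConv A) := by
  refine ⟨convex_univ, fun x _ y _ a b ha hb hab => ?_⟩
  simp only [smul_eq_mul]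
  refine le_of_forall_pos_le_add fun ε hε => ?_
  obtain ⟨u, hu⟩ := exists_lt_of_ciInf_lt (lt_add_of_pos_right (absInfConv A x) hε)
  obtain ⟨v, hv⟩ := exists_lt_of_ciInf_lt (lt_add_of_pos_right (absInfConv A y) hε)
  have hAuv := hconv.2 (mem_univ u) (mem_univ v) ha hb hab
  have habs := convexOn_univ_abs.2 (mem_univ (u - x)) (mem_univ (v - y)) ha hb hab
  simp only [smul_eq_mul] at hAuv habs
  calc absInfConv A (a * x + b * y)
      ≤ |(a * u + b * v) - (a * x + b * y)| + A (a * u + b * v) := absInfConv_le hA _ _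
    _ ≤ a * (|u - x| + A u) + b * (|v - y| + A v) := by
        rw [show (a * u + b * v) - (a * x + b * y) = a * (u - x) + b * (v - y) by ring]
        linarith
    _ ≤ a * (absInfConv A x + ε) + b * (absInfConv A y + ε) := by gcongr
    _ = a * absInfConv A x + b * absInfConv A y + ε := by linear_combination ε * hab

end absInfConv

section TailSlope

variable {f g : ℝ → ℝ} {s s' : ℝ}

theorem HasLeftTailSlope.add (hf : HasLeftTailSlope f s) (hg : HasLeftTailSlope g s') :
    HasLeftTailSlope (fun z => f z + g z) (s + s') := by
  obtain ⟨a, ha⟩ := hf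
  obtain ⟨b, hb⟩ := hg
  refine ⟨min a b, fun z w hzw hw => ?_⟩
  linear_combination ha z w hzw (hw.trans (min_le_left a b)) +
    hb z w hzw (hw.trans (min_le_right a b))

theorem HasLeftTailSlope.comp_add_right (hf : HasLeftTailSlope f s) (e : ℝ) :
    HasLeftTailSlope (fun z => f (z + e)) s := by
  obtain ⟨z₀, h⟩ := hf
  refine ⟨z₀ - e, fun z w hzw hw => ?_⟩
  linear_combination h (z + e) (w + e) (by linarith) (by linarith)

theorem hasLeftTailSlope_abs_add (d : ℝ) : HasLeftTailSlope (fun z => |d + z|) (-1) := by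
  refine ⟨-d, fun z w hzw hw => ?_⟩
  dsimp only
  rw [abs_of_nonpos (by linarith), abs_of_nonpos (by linarith)]
  ring

theorem hasLeftTailSlope_const_mul_abs (c : ℝ) : HasLeftTailSlope (fun z => c * |z|) (-c) := by
  refine ⟨0, fun z w hzw hw => ?_⟩
  dsimp only
  rw [abs_of_nonpos hw, abs_of_nonpos (hzw.trans hw)]
  ring

theorem HasRightTailSlope.of_comp_neg (hf : HasLeftTailSlope (fun z => f (-z)) (-s)) :
    HasRightTailSlope f s := by
  obtain ⟨z₀, h⟩ := hf
  refine ⟨-z₀, fun z w hz hzw => ?_⟩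
  have := h (-w) (-z) (neg_le_neg hzw) (by linarith)
  simp only [neg_neg] at this
  linear_combination -this

/-- Where `f` falls at rate at least `1`, no `w < t` does better than `w = t` in the infimum
defining `absInfConv f t`. -/
theorem HasLeftTailSlope.absInfConv (hbdd : BddBelow (range f)) (hf : HasLeftTailSlope f s)
    (hs : s ≤ -1) : HasLeftTailSlope (_root_.absInfConv f) (-1) := by
  obtain ⟨z₀, h⟩ := hf
  refine ⟨z₀, fun z t hzt ht => ?_⟩
  have upper := absInfConv_le_add_abs_sub hbdd z t
  rw [abs_of_nonpos (by linarith)] at upper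
  have lower : _root_.absInfConv f t + (t - z) ≤ _root_.absInfConv f z := by
    refine le_absInfConv fun w => ?_
    rcases le_total w t with hwt | htw
    · have hfall : s * (t - w) ≤ -1 * (t - w) := mul_le_mul_of_nonneg_right hs (by linarith)
      linarith [h w t hwt ht, absInfConv_le_self hbdd t, le_abs_self (w - z)]
    · have := absInfConv_le hbdd t w
      rw [abs_of_nonneg (by linarith)] at this
      rw [abs_of_nonneg (by linarith)]
      linarith
  linarith

end TailSlope

theorem Arec_add_two (c d : ℕ → ℝ) (j : ℕ) :
    Arec c d (j + 2) = fun z => c (j + 2) * |z| + absInfConv (Arec c d (j + 1)) (z + d (j + 2)) := by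
  funext z
  simp only [Arec, absInfConv, sub_sub]

theorem Arec_comp_neg (c d : ℕ → ℝ) : ∀ j z, Arec c d j (-z) = Arec c (-d) j z
  | 0, _ => rfl
  | 1, z => by
    simp only [Arec, Pi.neg_apply, abs_neg]
    rw [← abs_neg (d 1 + -z)]
    ring_nf
  | j + 2, z => by
    have ih : Arec c (-d) (j + 1) = fun w => Arec c d (j + 1) (-w) :=
      funext fun w => (Arec_comp_neg c d (j + 1) w).symm
    rw [Arec_add_two, Arec_add_two, ih]
    beta_reduce
    rw [absInfConv_comp_neg]
    simp only [abs_neg, Pi.neg_apply]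
    ring_nf

section Arec

variable {c d : ℕ → ℝ}

theorem Arec_nonneg (hc : ∀ j, 0 ≤ c j) : ∀ j z, 0 ≤ Arec c d j z
  | 0, _ => le_rfl
  | 1, z => add_nonneg (abs_nonneg _) (mul_nonneg (hc 1) (abs_nonneg z))
  | j + 2, z => by
    rw [Arec_add_two]
    exact add_nonneg (mul_nonneg (hc _) (abs_nonneg z)) (absInfConv_nonneg (Arec_nonneg hc _) _)

theorem bddBelow_range_Arec (hc : ∀ j, 0 ≤ c j) (j : ℕ) : BddBelow (range (Arec c d j)) :=
  ⟨0, by rintro _ ⟨z, rfl⟩; exact Arec_nonneg hc j z⟩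

theorem convexOn_Arec (hc : ∀ j, 0 ≤ c j) : ∀ j, ConvexOn ℝ univ (Arec c d j)
  | 0 => convexOn_const 0 convex_univ
  | 1 => (convexOn_univ_abs.translate_right (d 1)).add (convexOn_univ_abs.smul (hc 1))
  | j + 2 => by
    rw [Arec_add_two]
    exact (convexOn_univ_abs.smul (hc (j + 2))).add
      ((convexOn_absInfConv (bddBelow_range_Arec hc _) (convexOn_Arec hc (j + 1))).translate_left
        (d (j + 2)))

theorem hasLeftTailSlope_Arec (hc : ∀ j, 0 ≤ c j) :
    ∀ j, 1 ≤ j → HasLeftTailSlope (Arec c d j) (-1 - c j)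
  | 1, _ => by
    have := (hasLeftTailSlope_abs_add (d 1)).add (hasLeftTailSlope_const_mul_abs (c 1))
    rwa [← sub_eq_add_neg] at this
  | j + 2, _ => by
    rw [Arec_add_two, ← neg_add_eq_sub]
    have hfall : -1 - c (j + 1) ≤ -1 := by linarith [hc (j + 1)]
    exact (hasLeftTailSlope_const_mul_abs _).add
      (((hasLeftTailSlope_Arec hc (j + 1) (by omega)).absInfConv (bddBelow_range_Arec hc _)
        hfall).comp_add_right _)

end Arec

theorem stmt19 (c d : ℕ → ℝ) (hc : ∀ j, 0 ≤ c j) (j : ℕ) (hj : 1 ≤ j) :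
    ConvexOn ℝ Set.univ (Arec c d j) ∧
    -- the leftmost slope of `A j` is `-1 - c j` (in particular, at most `-1`)
    (∃ z₀ : ℝ, ∀ z w : ℝ, z ≤ w → w ≤ z₀ →
      Arec c d j w - Arec c d j z = (-1 - c j) * (w - z)) ∧
    -- the rightmost slope of `A j` is `1 + c j` (in particular, at least `1`)
    (∃ z₁ : ℝ, ∀ z w : ℝ, z₁ ≤ z → z ≤ w →
      Arec c d j w - Arec c d j z = (1 + c j) * (w - z)) := by
  have hright : HasRightTailSlope (Arec c d j) (1 + c j) := by
    refine .of_comp_neg ?_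
    rw [neg_add', funext (Arec_comp_neg c d j)]
    exact hasLeftTailSlope_Arec hc j hj
  exact ⟨convexOn_Arec hc j, hasLeftTailSlope_Arec hc j hj, hright⟩
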